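/- Under Assumption 1, the maximal robust region of uniform attraction R₀ is an open subset of ℝⁿ. -/

import Mathlib

open Metric Set Filter MeasureTheory

noncomputable section

abbrev St (n : ℕ) := EuclideanSpace ℝ (Fin n)

/-- Trajectory of the perturbed discrete-time system. -/
def traj {n m : ℕ} (f : St n → St m → St n) (x₀ : St n) (π : ℕ → St m) : ℕ → St n
  | 0 => x₀
  | k + 1 => f (traj f x₀ π k) (π k)

/-- A perturbation input policy takes values in `D`. -/
def IsPolicy {m : ℕ} (D : Set (St m)) (π : ℕ → St m) : Prop := ∀ k, π k ∈ D

/-- Maximal robust region of attraction. -/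
def RoA {n m : ℕ} (f : St n → St m → St n) (D : Set (St m)) (X : Set (St n)) : Set (St n) :=
  {x₀ | ∀ π, IsPolicy D π →
    (∀ k, traj f x₀ π k ∈ X) ∧ Tendsto (fun k => traj f x₀ π k) atTop (nhds 0)}

/-- `f` is a polynomial map in `(x, d)`. -/
def IsPolyMap2 {n m : ℕ} (f : St n → St m → St n) : Prop :=
  ∃ p : Fin n → MvPolynomial (Fin n ⊕ Fin m) ℝ,
    ∀ x d i, f x d i = MvPolynomial.eval (Sum.elim x d) (p i)

/-- A real-valued polynomial function on the state space. -/
def IsPolyFun {n : ℕ} (g : St n → ℝ) : Prop :=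
  ∃ p : MvPolynomial (Fin n) ℝ, ∀ x, g x = MvPolynomial.eval x p

/-- Assumption 1: uniform local exponential stability. -/
def Assumption1 {n m : ℕ} (f : St n → St m → St n) (D : Set (St m)) (X : Set (St n)) : Prop :=
  ∃ M r lam : ℝ, 0 < M ∧ 0 < r ∧ 0 < lam ∧ lam < 1 ∧ closedBall (0 : St n) r ⊆ X ∧
    ∀ x₀ ∈ closedBall (0 : St n) r, ∀ π, IsPolicy D π →
      ∀ k, ‖traj f x₀ π k‖ ≤ lam ^ k * M * ‖x₀‖

/-- Maximal robust region of uniform attraction (with ball radius `ε`). -/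
def R0 {n m : ℕ} (f : St n → St m → St n) (D : Set (St m)) (X : Set (St n)) (ε : ℝ) :
    Set (St n) :=
  {x₀ | (∃ δ > 0, ∀ π, IsPolicy D π → ∀ k, δ < infDist (traj f x₀ π k) Xᶜ) ∧
        (∃ K : ℕ, ∀ π, IsPolicy D π →
            ∃ k, 0 < k ∧ k ≤ K ∧ traj f x₀ π k ∈ closedBall (0 : St n) ε)}

/-- Extended-real logarithm with the convention `ln 0 = -∞`. -/
def elog (t : ℝ) : EReal := if t = 0 then ⊥ else (Real.log t : EReal)

/-- The value function `V`. -/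
def Vval {n m nX : ℕ} (f : St n → St m → St n) (D : Set (St m))
    (hX : Fin nX → St n → ℝ) (g : St n → ℝ) (x : St n) : EReal :=
  ⨆ π ∈ {π : ℕ → St m | IsPolicy D π}, ⨆ k : ℕ,
    ((∑ i ∈ Finset.range k, Real.log (g (traj f x π i) + 1) : ℝ) : EReal)
      - ⨅ j : Fin nX, elog (max (1 - hX j (traj f x π k)) 0)

/-- The Kruzhkov transformed value function `v = 1 - e^{-V}` (with `e^{-∞} = 0`). -/
def vval {n m nX : ℕ} (f : St n → St m → St n) (D : Set (St m))
    (hX : Fin nX → St n → ℝ) (g : St n → ℝ) (x : St n) : ℝ :=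
  if Vval f D hX g x = ⊤ then 1 else 1 - Real.exp (-(Vval f D hX g x).toReal)

/-- `w` is a (bounded continuous) solution of the Bellman equation. -/
def IsBellmanSolution {n m nX : ℕ} (f : St n → St m → St n) (D : Set (St m))
    (hX : Fin nX → St n → ℝ) (g : St n → ℝ) (w : St n → ℝ) : Prop :=
  (∀ x, min (sInf {y : ℝ | ∃ d ∈ D, y = w x - w (f x d) - g x * (1 - w x)})
            (w x - 1 + ⨅ j : Fin nX, max (1 - hX j x) 0) = 0) ∧ w 0 = 0

/-!
Let `x₀ ∈ R₀` have safety margin `δ` and uniform hitting time `K`. Since `f` is continuous and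
`D` and the closure of `X` are compact, trajectories from points near `x₀` stay `γ`-close to those
of `x₀` for the first `K` steps, uniformly over all policies. At the time `x₀` hits the `ε̄`-ball
such a trajectory lies in the `(ε̄ + γ)`-ball, which is inside `B(0, r)`; from then on exponential
stability keeps it in the ball of radius `M (ε̄ + γ) < r`, at a positive distance from `Xᶜ`, and
brings it into the `ε̄`-ball within a number of further steps independent of the policy.
-/

open Topology

def UniformlyExpStable {n m : ℕ} (f : St n → St m → St n) (D : Set (St m)) (r M lam : ℝ) :
    Prop :=
  ∀ x₀ ∈ closedBall (0 : St n) r, ∀ π, IsPolicy D π → ∀ k, ‖traj f x₀ π k‖ ≤ lam ^ k * M * ‖x₀‖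

theorem exists_pos_forall_dist_lt_of_isCompact {α β γ : Type*} [PseudoMetricSpace α]
    [PseudoMetricSpace β] [PseudoMetricSpace γ] {g : α → β → γ}
    (hg : Continuous fun q : α × β => g q.1 q.2) {C : Set α} {D : Set β} (hC : IsCompact C)
    (hD : IsCompact D) {ε : ℝ} (hε : 0 < ε) :
    ∃ ρ > 0, ∀ x ∈ C, ∀ y, dist x y < ρ → ∀ d ∈ D, dist (g x d) (g y d) < ε := by
  obtain ⟨ρ, hρ, hg'⟩ := Metric.mem_uniformity_dist.1 <|
    (hC.prod hD).uniformContinuousAt_of_continuousAt _ (fun _ _ => hg.continuousAt)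
      (Metric.dist_mem_uniformity hε)
  refine ⟨ρ, hρ, fun x hx y hxy d hd => hg' (a := (x, d)) (b := (y, d)) ?_ ⟨hx, hd⟩⟩
  simpa [Prod.dist_eq, hρ] using hxy

theorem sub_le_infDist_compl_of_closedBall_subset {E : Type*} [SeminormedAddCommGroup E]
    {X : Set E} {r s : ℝ} {y : E} (hball : closedBall 0 r ⊆ X) (hX : Xᶜ.Nonempty) (hy : ‖y‖ ≤ s) :
    r - s ≤ infDist y Xᶜ := by
  refine (le_infDist hX).2 fun z hz => ?_
  have hzr : r < ‖z‖ := by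
    by_contra! h
    exact hz (hball (mem_closedBall_zero_iff.2 h))
  have := norm_le_norm_add_const_of_dist_le (dist_comm z y).le
  linarith

section Trajectories

variable {n m : ℕ} {f : St n → St m → St n} {D : Set (St m)}

theorem traj_add (x : St n) (π : ℕ → St m) (a b : ℕ) :
    traj f x π (a + b) = traj f (traj f x π a) (fun j => π (a + j)) b := by
  induction b with
  | zero => rfl
  | succ b ih => exact congrArg (f · (π (a + b))) ih

theorem IsPolyMap2.continuous_uncurry (hf : IsPolyMap2 f) :
    Continuous fun q : St n × St m => f q.1 q.2 := by
  obtain ⟨p, hp⟩ := hf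
  have hcoord : Continuous fun q : St n × St m => (Sum.elim q.1 q.2 : Fin n ⊕ Fin m → ℝ) :=
    continuous_pi fun
      | .inl i => (PiLp.continuous_apply 2 _ i).comp continuous_fst
      | .inr j => (PiLp.continuous_apply 2 _ j).comp continuous_snd
  have : (fun q : St n × St m => f q.1 q.2) =
      fun q => WithLp.toLp 2 fun i => MvPolynomial.eval (Sum.elim q.1 q.2) (p i) := by
    funext q; ext i; exact hp q.1 q.2 i
  rw [this]
  exact (PiLp.continuous_toLp 2 _).comp
    (continuous_pi fun i => (MvPolynomial.continuous_eval (p i)).comp hcoord)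

theorem eventually_forall_dist_traj_lt (hf : Continuous fun q : St n × St m => f q.1 q.2)
    (hD : IsCompact D) {C : Set (St n)} (hC : IsCompact C) {x₀ : St n}
    (hx₀ : ∀ π, IsPolicy D π → ∀ k, traj f x₀ π k ∈ C) (K : ℕ) {γ : ℝ} (hγ : 0 < γ) :
    ∀ᶠ y₀ in 𝓝 x₀, ∀ π, IsPolicy D π → ∀ k ≤ K, dist (traj f y₀ π k) (traj f x₀ π k) < γ := by
  induction K generalizing γ with
  | zero =>
    filter_upwards [Metric.ball_mem_nhds x₀ hγ] with y₀ hy₀ π _ k hk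
    obtain rfl := Nat.le_zero.1 hk
    exact mem_ball.1 hy₀
  | succ K ih =>
    obtain ⟨ρ, hρ, hstep⟩ := exists_pos_forall_dist_lt_of_isCompact hf hC hD hγ
    filter_upwards [ih (lt_min hγ hρ)] with y₀ hy₀ π hπ k hk
    rcases Nat.le_succ_iff.1 hk with hk | rfl
    · exact (hy₀ π hπ k hk).trans_le (min_le_left _ _)
    · rw [dist_comm]
      refine hstep _ (hx₀ π hπ K) _ ?_ _ (hπ K)
      exact (dist_comm _ _).trans_lt ((hy₀ π hπ K le_rfl).trans_le (min_le_right _ _))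

end Trajectories

section Stability

variable {n m : ℕ} {f : St n → St m → St n} {D : Set (St m)} {X : Set (St n)}
  {r M lam ε γ δ : ℝ} {x₀ y₀ : St n} {K : ℕ}

theorem UniformlyExpStable.norm_traj_add_le (h : UniformlyExpStable f D r M lam) (hM : 0 ≤ M)
    (hlam : 0 ≤ lam) {π : ℕ → St m} (hπ : IsPolicy D π) {y : St n} {k : ℕ} {s : ℝ}
    (hk : ‖traj f y π k‖ ≤ s) (hs : s ≤ r) (j : ℕ) :
    ‖traj f y π (k + j)‖ ≤ lam ^ j * M * s := by
  rw [traj_add]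
  calc _ ≤ lam ^ j * M * ‖traj f y π k‖ :=
        h _ (mem_closedBall_zero_iff.2 (hk.trans hs)) _ (fun i => hπ (k + i)) j
    _ ≤ lam ^ j * M * s := by gcongr

theorem UniformlyExpStable.exists_norm_traj_add_le (h : UniformlyExpStable f D r M lam)
    (hM : 0 ≤ M) (hlam : 0 ≤ lam)
    (hhit : ∀ π, IsPolicy D π → ∃ k, 0 < k ∧ k ≤ K ∧ traj f x₀ π k ∈ closedBall 0 ε)
    (hclose : ∀ π, IsPolicy D π → ∀ k ≤ K, dist (traj f y₀ π k) (traj f x₀ π k) < γ)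
    (hεγ : ε + γ ≤ r) {π : ℕ → St m} (hπ : IsPolicy D π) :
    ∃ k₁, 0 < k₁ ∧ k₁ ≤ K ∧ ∀ j, ‖traj f y₀ π (k₁ + j)‖ ≤ lam ^ j * M * (ε + γ) := by
  obtain ⟨k₁, hk₁0, hk₁K, hk₁⟩ := hhit π hπ
  have hy₀k₁ : ‖traj f y₀ π k₁‖ ≤ ε + γ :=
    (norm_le_norm_add_const_of_dist_le (hclose π hπ k₁ hk₁K).le).trans
      (add_le_add_left (mem_closedBall_zero_iff.1 hk₁) γ)
  exact ⟨k₁, hk₁0, hk₁K, h.norm_traj_add_le hM hlam hπ hy₀k₁ hεγ⟩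

theorem UniformlyExpStable.exists_forall_lt_infDist_traj (h : UniformlyExpStable f D r M lam)
    (hM : 0 ≤ M) (hlam0 : 0 ≤ lam) (hlam1 : lam ≤ 1) (hball : closedBall 0 r ⊆ X)
    (hsafe : ∀ π, IsPolicy D π → ∀ k, δ < infDist (traj f x₀ π k) Xᶜ)
    (hhit : ∀ π, IsPolicy D π → ∃ k, 0 < k ∧ k ≤ K ∧ traj f x₀ π k ∈ closedBall 0 ε)
    (hclose : ∀ π, IsPolicy D π → ∀ k ≤ K, dist (traj f y₀ π k) (traj f x₀ π k) < γ)
    (hγδ : γ < δ) (hεγ : ε + γ ≤ r) (hMεγ : M * (ε + γ) < r) :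
    ∃ δ' > 0, ∀ π, IsPolicy D π → ∀ k, δ' < infDist (traj f y₀ π k) Xᶜ := by
  refine ⟨min (δ - γ) ((r - M * (ε + γ)) / 2), by simp [hγδ, hMεγ], fun π hπ k => ?_⟩
  obtain ⟨k₁, -, hk₁K, hdecay⟩ := h.exists_norm_traj_add_le hM hlam0 hhit hclose hεγ hπ
  rcases le_or_gt k k₁ with hk | hk
  · have := infDist_le_infDist_add_dist (x := traj f x₀ π k) (y := traj f y₀ π k) (s := Xᶜ)
    linarith [hsafe π hπ k, hclose π hπ k (hk.trans hk₁K),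
      dist_comm (traj f x₀ π k) (traj f y₀ π k), min_le_left (δ - γ) ((r - M * (ε + γ)) / 2)]
  · have hpos : 0 < infDist (traj f x₀ π k) Xᶜ :=
      (dist_nonneg.trans_lt ((hclose π hπ 0 K.zero_le).trans hγδ)).trans (hsafe π hπ k)
    have hXc : Xᶜ.Nonempty := nonempty_iff_ne_empty.2 fun hX => by simp [hX] at hpos
    have hy₀k : ‖traj f y₀ π k‖ ≤ M * (ε + γ) := by
      obtain ⟨j, rfl⟩ := Nat.exists_eq_add_of_lt hk
      calc _ ≤ lam ^ (j + 1) * (M * (ε + γ)) := (hdecay (j + 1)).trans_eq (mul_assoc _ _ _)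
        _ ≤ M * (ε + γ) := mul_le_of_le_one_left (by linarith [(norm_nonneg _).trans (hdecay 0)])
            (pow_le_one₀ hlam0 hlam1)
    linarith [sub_le_infDist_compl_of_closedBall_subset hball hXc hy₀k,
      min_le_right (δ - γ) ((r - M * (ε + γ)) / 2)]

theorem UniformlyExpStable.exists_forall_hit (h : UniformlyExpStable f D r M lam)
    (hM : 0 ≤ M) (hlam0 : 0 ≤ lam) (hlam1 : lam < 1) (hε : 0 < ε)
    (hhit : ∀ π, IsPolicy D π → ∃ k, 0 < k ∧ k ≤ K ∧ traj f x₀ π k ∈ closedBall 0 ε)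
    (hclose : ∀ π, IsPolicy D π → ∀ k ≤ K, dist (traj f y₀ π k) (traj f x₀ π k) < γ)
    (hεγ : ε + γ ≤ r) :
    ∃ K', ∀ π, IsPolicy D π → ∃ k, 0 < k ∧ k ≤ K' ∧ traj f y₀ π k ∈ closedBall 0 ε := by
  obtain ⟨N, hN⟩ := (((tendsto_pow_atTop_nhds_zero_of_lt_one hlam0 hlam1).mul_const
    (M * (ε + γ))).eventually (gt_mem_nhds (by simpa using hε))).exists
  refine ⟨K + N, fun π hπ => ?_⟩
  obtain ⟨k₁, hk₁0, hk₁K, hdecay⟩ := h.exists_norm_traj_add_le hM hlam0 hhit hclose hεγ hπ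
  refine ⟨k₁ + N, by omega, by omega, mem_closedBall_zero_iff.2 ?_⟩
  exact (hdecay N).trans (by rw [mul_assoc]; exact hN.le)

end Stability

theorem stmt8_general
    {n m : ℕ}
    (f : St n → St m → St n) (hfpoly : IsPolyMap2 f)
    (D : Set (St m)) (hD : IsCompact D)
    (X : Set (St n))
    (hXbdd : Bornology.IsBounded X)
    (M r lam : ℝ) (hM : 0 < M) (hr : 0 < r) (hlam0 : 0 < lam) (hlam1 : lam < 1)
    (hball : closedBall (0 : St n) r ⊆ X)
    (hstab : ∀ x₀ ∈ closedBall (0 : St n) r, ∀ π, IsPolicy D π →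
      ∀ k, ‖traj f x₀ π k‖ ≤ lam ^ k * M * ‖x₀‖)
    :
    IsOpen (R0 f D X (min (r / (2 * M)) (r / 2))) := by
  set ε := min (r / (2 * M)) (r / 2)
  have hε : 0 < ε := by positivity
  have hεr : ε ≤ r / 2 := min_le_right _ _
  have hMε : M * ε ≤ r / 2 :=
    (mul_le_mul_of_nonneg_left (min_le_left _ _) hM.le).trans_eq (by field_simp)
  rw [isOpen_iff_mem_nhds]
  rintro x₀ ⟨⟨δ, hδ, hsafe⟩, K, hhit⟩
  set γ := min (δ / 2) (ε / 2)
  have hγ : 0 < γ := by positivity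
  have hγδ : γ < δ := (min_le_left _ _).trans_lt (by linarith)
  have hγε : γ ≤ ε / 2 := min_le_right _ _
  have hx₀X : ∀ π, IsPolicy D π → ∀ k, traj f x₀ π k ∈ closure X := fun π hπ k => by
    by_contra hk
    exact (hδ.trans (hsafe π hπ k)).ne' (infDist_zero_of_mem fun hk' => hk (subset_closure hk'))
  filter_upwards [eventually_forall_dist_traj_lt hfpoly.continuous_uncurry hD
    hXbdd.isCompact_closure hx₀X K hγ] with y₀ hclose
  have hstab' : UniformlyExpStable f D r M lam := hstab
  exact ⟨hstab'.exists_forall_lt_infDist_traj hM.le hlam0.le hlam1.le hball hsafe hhit hclose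
      hγδ (by linarith) (by nlinarith),
    hstab'.exists_forall_hit hM.le hlam0.le hlam1 hε hhit hclose (by linarith)⟩

theorem stmt8
    {n m nX : ℕ} (hnX : 0 < nX)
    (f : St n → St m → St n) (hfpoly : IsPolyMap2 f)
    (D : Set (St m)) (hD : IsCompact D)
    (hf0 : ∀ d ∈ D, f 0 d = 0)
    (hX : Fin nX → St n → ℝ) (hXpoly : ∀ j, IsPolyFun (hX j))
    (hX0 : ∀ j, hX j 0 = 0) (hXpos : ∀ j, ∀ x : St n, x ≠ 0 → 0 < hX j x)
    (X : Set (St n)) (hXdef : X = {x | ∀ j, hX j x < 1})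
    (hXbdd : Bornology.IsBounded X) (hXopen : IsOpen X)
    (M r lam : ℝ) (hM : 0 < M) (hr : 0 < r) (hlam0 : 0 < lam) (hlam1 : lam < 1)
    (hball : closedBall (0 : St n) r ⊆ X)
    (hstab : ∀ x₀ ∈ closedBall (0 : St n) r, ∀ π, IsPolicy D π →
      ∀ k, ‖traj f x₀ π k‖ ≤ lam ^ k * M * ‖x₀‖)
    :
    IsOpen (R0 f D X (min (r / (2 * M)) (r / 2))) :=
  stmt8_general f hfpoly D hD X hXbdd M r lam hM hr hlam0 hlam1 hball hstab
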